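/- arXiv:2205.06508 — 8 statements merged into one kernel-verified Lean document; each statement's English description precedes it below -/
import Mathlib

section
/- Let (X,ρ) be a weakly rigid semimetric space with |X| ≥ 4 whose three-point subspaces are pairwise isometric. Then |X| = 4. -/
open Cardinal

def IsSemimetric {X : Type*} (d : X → X → ℝ) : Prop :=
  (∀ x y, d x y = d y x) ∧ (∀ x y, 0 ≤ d x y) ∧ (∀ x y, d x y = 0 ↔ x = y)

/-- `Ψ : Y ≃ X` is a combinatorial similarity of `(X,d)` and `(Y,ρ)`:
there is a bijection `f` from the range of `d` onto the range of `ρ`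
with `ρ x y = f (d (Ψ x) (Ψ y))`. -/
def CombSimF {X Y : Type*} (d : X → X → ℝ) (ρ : Y → Y → ℝ) (Ψ : Y ≃ X) : Prop :=
  ∃ f : ℝ → ℝ, Set.BijOn f (Set.range (Function.uncurry d)) (Set.range (Function.uncurry ρ)) ∧
    ∀ x y : Y, ρ x y = f (d (Ψ x) (Ψ y))

/-- Combinatorial self similarity, in the equivalent "equality of distances" form. -/
def CombSelfSim {X : Type*} (d : X → X → ℝ) (Φ : Equiv.Perm X) : Prop :=
  ∀ x y u v : X, d x y = d u v ↔ d (Φ x) (Φ y) = d (Φ u) (Φ v)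

def StronglyRigid {X : Type*} (d : X → X → ℝ) : Prop :=
  ∀ x y u v : X, d x y = d u v → d x y ≠ 0 → (x = u ∧ y = v) ∨ (x = v ∧ y = u)

def DiscreteSemimetric {X : Type*} (d : X → X → ℝ) : Prop :=
  Cardinal.mk (Set.range (Function.uncurry d)) ≤ 2

/-- every three-point subspace is strongly rigid -/
def WeaklyRigid {X : Type*} (d : X → X → ℝ) : Prop :=
  ∀ x y z : X, x ≠ y → y ≠ z → x ≠ z →
    d x y ≠ d y z ∧ d y z ≠ d z x ∧ d z x ≠ d x y

/-- the subspaces `A` and `B` of `(X,d)` are isometric -/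
def IsometricSubsets {X : Type*} (d : X → X → ℝ) (A B : Set X) : Prop :=
  ∃ e : A ≃ B, ∀ a b : A, d (e a) (e b) = d (a : X) (b : X)

theorem stmt6 {X : Type*} (ρ : X → X → ℝ) (hρ : IsSemimetric ρ)
    (h4 : 4 ≤ Cardinal.mk X) (hw : WeaklyRigid ρ)
    (hiso : ∀ A B : Set X, A.ncard = 3 → B.ncard = 3 → IsometricSubsets ρ A B) :
    Cardinal.mk X = 4 := by
  obtain ⟨hsym, _, hzero⟩ := hρ
  by_contra hne
  -- get 5 distinct points
  have hlt : ((4:ℕ):Cardinal) < Cardinal.mk X := by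
    exact_mod_cast lt_of_le_of_ne h4 (Ne.symm hne)
  have h5 : ((5:ℕ):Cardinal) ≤ Cardinal.mk X := by
    rw [show ((5:ℕ):Cardinal) = Order.succ ((4:ℕ):Cardinal) from Cardinal.nat_succ 4]
    exact Order.succ_le_of_lt hlt
  obtain ⟨s, hs⟩ := Cardinal.le_mk_iff_exists_set.1 h5
  obtain ⟨e5⟩ := Cardinal.mk_eq_nat_iff.1 hs
  set g : Fin 5 → X := fun i => (e5.symm i : X) with hg
  have hginj : Function.Injective g := by
    intro i j h
    exact e5.symm.injective (Subtype.ext h)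
  have hne5 : ∀ i j : Fin 5, i ≠ j → g i ≠ g j := fun i j h hc => h (hginj hc)
  -- three-point sets have ncard 3
  have hcard : ∀ x y z : X, x ≠ y → y ≠ z → x ≠ z → ({x, y, z} : Set X).ncard = 3 := by
    intro x y z hxy hyz hxz
    rw [Set.ncard_eq_three]
    exact ⟨x, y, z, hxy, hxz, hyz, rfl⟩
  -- key: every distance between distinct points is among the distances of a fixed triangle
  have key : ∀ x y z u v w : X, x ≠ y → y ≠ z → x ≠ z → u ≠ v → v ≠ w → u ≠ w →
      ρ u v = ρ x y ∨ ρ u v = ρ y z ∨ ρ u v = ρ x z := by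
    intro x y z u v w hxy hyz hxz huv hvw huw
    obtain ⟨e, he⟩ := hiso {x,y,z} {u,v,w} (hcard x y z hxy hyz hxz) (hcard u v w huv hvw huw)
    have hu : u ∈ ({u,v,w} : Set X) := by simp
    have hv : v ∈ ({u,v,w} : Set X) := by simp
    obtain ⟨pu, hpue⟩ : ∃ pu : ({x,y,z}:Set X), e pu = ⟨u, hu⟩ := ⟨e.symm _, e.apply_symm_apply _⟩
    obtain ⟨pv, hpve⟩ : ∃ pv : ({x,y,z}:Set X), e pv = ⟨v, hv⟩ := ⟨e.symm _, e.apply_symm_apply _⟩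
    have h1 : ρ u v = ρ (pu : X) (pv : X) := by
      have := he pu pv
      rw [hpue, hpve] at this
      exact this
    have hpuv : (pu : X) ≠ (pv : X) := by
      intro h
      apply huv
      have h2 : pu = pv := Subtype.ext h
      have h3 := hpue.symm.trans ((congrArg e h2).trans hpve)
      exact congrArg Subtype.val h3
    have hmu : (pu : X) ∈ ({x,y,z} : Set X) := pu.2
    have hmv : (pv : X) ∈ ({x,y,z} : Set X) := pv.2
    simp only [Set.mem_insert_iff, Set.mem_singleton_iff] at hmu hmv
    rw [h1]
    rcases hmu with h1u | h1u | h1u <;> rcases hmv with h1v | h1v | h1v <;>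
        rw [h1u, h1v] at hpuv ⊢ <;>
      first
        | exact absurd rfl hpuv
        | exact Or.inl rfl
        | exact Or.inl (hsym _ _)
        | exact Or.inr (Or.inl rfl)
        | exact Or.inr (Or.inl (hsym _ _))
        | exact Or.inr (Or.inr rfl)
        | exact Or.inr (Or.inr (hsym _ _))
  -- the four distances from g 0
  set x0 := g 0; set x1 := g 1; set x2 := g 2; set x3 := g 3; set x4 := g 4
  have d01 : x0 ≠ x1 := hne5 0 1 (by decide)
  have d02 : x0 ≠ x2 := hne5 0 2 (by decide)
  have d03 : x0 ≠ x3 := hne5 0 3 (by decide)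
  have d04 : x0 ≠ x4 := hne5 0 4 (by decide)
  have d12 : x1 ≠ x2 := hne5 1 2 (by decide)
  have d13 : x1 ≠ x3 := hne5 1 3 (by decide)
  have d14 : x1 ≠ x4 := hne5 1 4 (by decide)
  have d23 : x2 ≠ x3 := hne5 2 3 (by decide)
  have d24 : x2 ≠ x4 := hne5 2 4 (by decide)
  have d34 : x3 ≠ x4 := hne5 3 4 (by decide)
  -- distances from x0 are pairwise distinct
  have star : ∀ a b : X, a ≠ x0 → b ≠ x0 → a ≠ b → ρ x0 a ≠ ρ x0 b := by
    intro a b ha hb hab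
    have := (hw a x0 b ha (Ne.symm hb) hab).1
    rwa [hsym a x0] at this
  have key3 := key x0 x1 x2 x0 x3 x4 d01 d12 d02 d03 d34 d04
  have key4 := key x0 x1 x2 x0 x4 x3 d01 d12 d02 d04 (Ne.symm d34) d03
  have e3 : ρ x0 x3 = ρ x1 x2 := by
    rcases key3 with h | h | h
    · exact absurd h.symm (star x1 x3 (Ne.symm d01) (Ne.symm d03) d13)
    · exact h
    · exact absurd h.symm (star x2 x3 (Ne.symm d02) (Ne.symm d03) d23)
  have e4 : ρ x0 x4 = ρ x1 x2 := by
    rcases key4 with h | h | h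
    · exact absurd h.symm (star x1 x4 (Ne.symm d01) (Ne.symm d04) d14)
    · exact h
    · exact absurd h.symm (star x2 x4 (Ne.symm d02) (Ne.symm d04) d24)
  exact star x3 x4 (Ne.symm d03) (Ne.symm d04) d34 (e3.trans e4.symm)
end

section
/- Let (X,d) be a three-point metric space. Then every permutation of X is a combinatorial self similarity of (X,d) if and only if (X,d) is strongly rigid or discrete. -/
open Cardinal

lemma sr_css {X : Type*} [MetricSpace X]
    (h : StronglyRigid (fun x y : X => dist x y)) (Φ : Equiv.Perm X) :
    CombSelfSim (fun x y : X => dist x y) Φ := by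
  intro x y u v
  show dist x y = dist u v ↔ dist (Φ x) (Φ y) = dist (Φ u) (Φ v)
  constructor
  · intro he
    by_cases h0 : dist x y = 0
    · have hxy : x = y := dist_eq_zero.mp h0
      have huv : u = v := dist_eq_zero.mp (he ▸ h0)
      subst hxy; subst huv; simp
    · rcases h x y u v he h0 with ⟨rfl, rfl⟩ | ⟨rfl, rfl⟩
      · rfl
      · exact dist_comm _ _
  · intro he
    by_cases h0 : dist (Φ x) (Φ y) = 0
    · have hxy : x = y := Φ.injective (dist_eq_zero.mp h0)
      have huv : u = v := Φ.injective (dist_eq_zero.mp (he ▸ h0))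
      subst hxy; subst huv; simp
    · rcases h (Φ x) (Φ y) (Φ u) (Φ v) he h0 with ⟨h1, h2⟩ | ⟨h1, h2⟩
      · rw [show x = u from Φ.injective h1, show y = v from Φ.injective h2]
      · rw [show x = v from Φ.injective h1, show y = u from Φ.injective h2, dist_comm]

lemma uniform_css {X : Type*} [MetricSpace X]
    (h : ∀ p q r s : X, p ≠ q → r ≠ s → dist p q = dist r s) (Φ : Equiv.Perm X) :
    CombSelfSim (fun x y : X => dist x y) Φ := by
  have key : ∀ p q r s : X, dist p q = dist r s ↔ (p = q ↔ r = s) := by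
    intro p q r s
    constructor
    · intro he
      constructor
      · rintro rfl; exact dist_eq_zero.mp (by simpa using he.symm)
      · rintro rfl; exact dist_eq_zero.mp (by simpa using he)
    · intro hiff
      by_cases hpq : p = q
      · subst hpq
        have : r = s := hiff.mp rfl
        subst this; simp
      · exact h p q r s hpq (fun hh => hpq (hiff.mpr hh))
  intro x y u v
  show dist x y = dist u v ↔ dist (Φ x) (Φ y) = dist (Φ u) (Φ v)
  rw [key, key]
  simp [Φ.injective.eq_iff]

lemma all_eq {X : Type*} [MetricSpace X]
    (hcss : ∀ Φ : Equiv.Perm X, CombSelfSim (fun x y : X => dist x y) Φ)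
    {a b c : X} (hca : c ≠ a) (hcb : c ≠ b)
    (heq : dist a b = dist a c) : dist a b = dist b c := by
  classical
  have h : dist a b = dist a c ↔
      dist (Equiv.swap a b a) (Equiv.swap a b b) = dist (Equiv.swap a b a) (Equiv.swap a b c) :=
    (hcss (Equiv.swap a b)) a b a c
  rw [Equiv.swap_apply_left, Equiv.swap_apply_right,
    Equiv.swap_apply_of_ne_of_ne hca hcb] at h
  calc dist a b = dist b a := dist_comm a b
    _ = dist b c := h.mp heq

lemma discrete_of {X : Type*} [MetricSpace X] (h3 : Nat.card X = 3)
    (hcss : ∀ Φ : Equiv.Perm X, CombSelfSim (fun x y : X => dist x y) Φ)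
    {a b c : X} (hab : a ≠ b) (hac : a ≠ c) (hbc : b ≠ c)
    (h1 : dist a b = dist a c) :
    DiscreteSemimetric (fun x y : X => dist x y) := by
  classical
  have h2 : dist a b = dist b c := all_eq hcss hac.symm hbc.symm h1
  haveI : Finite X := Nat.finite_of_card_ne_zero (by omega)
  haveI := Fintype.ofFinite X
  have hcard : Fintype.card X = 3 := by rw [← Nat.card_eq_fintype_card]; exact h3
  have hall : ∀ p : X, p = a ∨ p = b ∨ p = c := by
    intro p
    by_contra hc
    push_neg at hc
    obtain ⟨ha', hb', hc'⟩ := hc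
    have hle : ({p, a, b, c} : Finset X).card ≤ Fintype.card X := Finset.card_le_univ _
    have h4 : ({p, a, b, c} : Finset X).card = 4 := by
      rw [Finset.card_insert_of_notMem (by simp [ha', hb', hc']),
          Finset.card_insert_of_notMem (by simp [hab, hac]),
          Finset.card_insert_of_notMem (by simp [hbc]),
          Finset.card_singleton]
    omega
  have hd : ∀ p q : X, dist p q = 0 ∨ dist p q = dist a b := by
    intro p q
    rcases eq_or_ne p q with rfl | hpq
    · left; simp
    · right
      rcases hall p with rfl | rfl | rfl <;> rcases hall q with rfl | rfl | rfl <;>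
        first
          | exact absurd rfl hpq
          | rfl
          | exact h1.symm
          | exact h2.symm
          | exact dist_comm _ _
          | exact (dist_comm _ _).trans h1.symm
          | exact (dist_comm _ _).trans h2.symm
  unfold DiscreteSemimetric
  have hsub : Set.range (Function.uncurry (fun x y : X => dist x y)) ⊆
      ({0, dist a b} : Set ℝ) := by
    rintro r ⟨⟨p, q⟩, rfl⟩
    simpa using hd p q
  calc Cardinal.mk (Set.range (Function.uncurry (fun x y : X => dist x y)))
      ≤ Cardinal.mk ({0, dist a b} : Set ℝ) := Cardinal.mk_le_mk_of_subset hsub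
    _ ≤ Cardinal.mk ({dist a b} : Set ℝ) + 1 := Cardinal.mk_insert_le
    _ ≤ 2 := by
        rw [Cardinal.mk_singleton]
        exact le_of_eq one_add_one_eq_two

lemma discrete_uniform {X : Type*} [MetricSpace X] [Nonempty X]
    (hd : DiscreteSemimetric (fun x y : X => dist x y)) :
    ∀ p q r s : X, p ≠ q → r ≠ s → dist p q = dist r s := by
  intro p q r s hpq hrs
  by_contra hne
  have hp0 : dist p q ≠ 0 := dist_ne_zero.mpr hpq
  have hr0 : dist r s ≠ 0 := dist_ne_zero.mpr hrs
  have hsub : ({0, dist p q, dist r s} : Set ℝ) ⊆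
      Set.range (Function.uncurry (fun x y : X => dist x y)) := by
    rintro t (rfl | rfl | rfl)
    · exact ⟨(p, p), by show dist p p = 0; simp⟩
    · exact ⟨(p, q), rfl⟩
    · exact ⟨(r, s), rfl⟩
  have h3 : (3 : Cardinal) ≤
      Cardinal.mk (Set.range (Function.uncurry (fun x y : X => dist x y))) := by
    have hm : Cardinal.mk ({0, dist p q, dist r s} : Set ℝ) = 3 := by
      rw [Cardinal.mk_insert (by simp [Ne.symm hp0, Ne.symm hr0]),
          Cardinal.mk_insert (by simp [hne]), Cardinal.mk_singleton]
      norm_num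
    calc (3 : Cardinal) = Cardinal.mk ({0, dist p q, dist r s} : Set ℝ) := hm.symm
      _ ≤ _ := Cardinal.mk_le_mk_of_subset hsub
  have hcon : (3 : Cardinal) ≤ 2 := h3.trans hd
  rw [show ((3 : Cardinal)) = ((3 : ℕ) : Cardinal) by norm_num,
      show ((2 : Cardinal)) = ((2 : ℕ) : Cardinal) by norm_num,
      Nat.cast_le] at hcon
  omega

theorem stmt9 {X : Type*} [MetricSpace X] (h3 : Nat.card X = 3) :
    (∀ Φ : Equiv.Perm X, CombSelfSim (fun x y : X => dist x y) Φ) ↔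
      (StronglyRigid (fun x y : X => dist x y) ∨
        DiscreteSemimetric (fun x y : X => dist x y)) := by
  classical
  haveI : Finite X := Nat.finite_of_card_ne_zero (by omega)
  haveI : Nonempty X := (Nat.card_pos_iff.mp (by omega)).1
  constructor
  · intro hcss
    by_cases hsr : StronglyRigid (fun x y : X => dist x y)
    · exact Or.inl hsr
    right
    unfold StronglyRigid at hsr
    push_neg at hsr
    obtain ⟨x, y, u, v, he', h0', hne1, hne2⟩ := hsr
    have he : dist x y = dist u v := he'
    have h0 : dist x y ≠ 0 := h0'
    have hxy : x ≠ y := fun h => h0 (by simp [h])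
    have huv : u ≠ v := fun h => h0 (by rw [he]; simp [h])
    have hmem : x = u ∨ x = v ∨ y = u ∨ y = v := by
      by_contra hc
      push_neg at hc
      obtain ⟨h1, h2, h3', h4⟩ := hc
      haveI := Fintype.ofFinite X
      have hcard : Fintype.card X = 3 := by rw [← Nat.card_eq_fintype_card]; exact h3
      have hle : ({x, y, u, v} : Finset X).card ≤ Fintype.card X := Finset.card_le_univ _
      have h4c : ({x, y, u, v} : Finset X).card = 4 := by
        rw [Finset.card_insert_of_notMem (by simp [hxy, h1, h2]),
            Finset.card_insert_of_notMem (by simp [h3', h4]),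
            Finset.card_insert_of_notMem (by simp [huv]),
            Finset.card_singleton]
      omega
    rcases hmem with rfl | rfl | rfl | rfl
    · have hyv : y ≠ v := hne1 rfl
      exact discrete_of h3 hcss hxy huv hyv he
    · have hyu : y ≠ u := hne2 rfl
      exact discrete_of h3 hcss hxy (Ne.symm huv) hyu (he.trans (dist_comm u x))
    · have hxv : x ≠ v := fun h => hne2 h rfl
      exact discrete_of h3 hcss (Ne.symm hxy) huv hxv ((dist_comm y x).trans he)
    · have hxu : x ≠ u := fun h => hne1 h rfl
      exact discrete_of h3 hcss (Ne.symm hxy) (Ne.symm huv) hxu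
        ((dist_comm y x).trans (he.trans (dist_comm u y)))
  · rintro (hsr | hd) Φ
    · exact sr_css hsr Φ
    · exact uniform_css (discrete_uniform hd) Φ
end

section
/- Let (X,d) be a semimetric space and Y a nonempty subset of X. If every permutation of X is a combinatorial self similarity of (X,d), then every permutation of Y is a combinatorial self similarity of the subspace (Y, d|_{Y×Y}). -/
open Cardinal

theorem stmt10 {X : Type*} (d : X → X → ℝ) (hd : IsSemimetric d)
    (Y : Set X) (hY : Y.Nonempty)
    (h : ∀ Φ : Equiv.Perm X, CombSelfSim d Φ) :
    ∀ Φ : Equiv.Perm Y, CombSelfSim (fun a b : Y => d (a : X) (b : X)) Φ := by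
  classical
  intro Φ x y u v
  set Φ' : Equiv.Perm X := Φ.extendDomain (Equiv.refl Y) with hΦ'
  have key : ∀ a : Y, Φ' (a : X) = (Φ a : X) := by
    intro a
    rw [hΦ', Equiv.Perm.extendDomain_apply_subtype _ _ a.2]
    rfl
  have := h Φ' (x : X) (y : X) (u : X) (v : X)
  simpa [key] using this
end

section
/- Let (X,d) be a semimetric space with |X| ≥ 3. Then d is discrete if and only if (X,d) contains an equilateral triangle (three distinct points with pairwise equal nonzero distances) and every permutation of X is a combinatorial self similarity of (X,d). -/
open Cardinal

theorem stmt12 {X : Type*} (d : X → X → ℝ) (hd : IsSemimetric d)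
    (h3 : 3 ≤ Cardinal.mk X) :
    DiscreteSemimetric d ↔
      ((∃ x₁ x₂ x₃ : X, x₁ ≠ x₂ ∧ x₂ ≠ x₃ ∧ x₁ ≠ x₃ ∧
          d x₁ x₂ = d x₂ x₃ ∧ d x₂ x₃ = d x₃ x₁) ∧
        ∀ Φ : Equiv.Perm X, CombSelfSim d Φ) := by
  classical
  obtain ⟨dsymm, _dnonneg, dzero⟩ := hd
  constructor
  · intro hdisc
    -- the distance is constant on pairs of distinct points
    have hne : Nonempty X := by
      rw [← Cardinal.mk_ne_zero_iff]
      intro h0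
      rw [h0] at h3
      exact absurd h3 (by norm_num)
    obtain ⟨w⟩ := hne
    have key : ∀ a b u v : X, a ≠ b → u ≠ v → d a b = d u v := by
      intro a b u v hab huv
      by_contra hneq
      have h0ab : d a b ≠ 0 := fun h => hab ((dzero a b).mp h)
      have h0uv : d u v ≠ 0 := fun h => huv ((dzero u v).mp h)
      have hsub : ({0, d a b, d u v} : Set ℝ) ⊆ Set.range (Function.uncurry d) := by
        rintro t (rfl | rfl | rfl)
        · exact ⟨(w, w), (dzero w w).mpr rfl⟩
        · exact ⟨(a, b), rfl⟩
        · exact ⟨(u, v), rfl⟩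
      have hm : Cardinal.mk ({0, d a b, d u v} : Set ℝ) = 3 := by
        rw [Cardinal.mk_insert, Cardinal.mk_insert, Cardinal.mk_singleton]
        · norm_num
        · simpa using hneq
        · simp only [Set.mem_insert_iff, Set.mem_singleton_iff, not_or]
          exact ⟨fun h => h0ab h.symm, fun h => h0uv h.symm⟩
      have hle : (3 : Cardinal) ≤ 2 := by
        calc (3 : Cardinal) = Cardinal.mk ({0, d a b, d u v} : Set ℝ) := hm.symm
          _ ≤ Cardinal.mk (Set.range (Function.uncurry d)) :=
              Cardinal.mk_le_mk_of_subset hsub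
          _ ≤ 2 := hdisc
      exact absurd hle (by norm_num)
    have hchar : ∀ p q r s : X, d p q = d r s ↔ (p = q ↔ r = s) := by
      intro p q r s
      constructor
      · intro h
        constructor
        · intro hpq
          apply (dzero r s).mp
          rw [← h, hpq]
          exact (dzero q q).mpr rfl
        · intro hrs
          apply (dzero p q).mp
          rw [h, hrs]
          exact (dzero s s).mpr rfl
      · intro h
        by_cases hpq : p = q
        · rw [(dzero p q).mpr hpq, (dzero r s).mpr (h.mp hpq)]
        · exact key p q r s hpq (fun hrs => hpq (h.mpr hrs))
      -- done
    refine ⟨?_, ?_⟩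
    · -- equilateral triangle
      have h1 : (1 : Cardinal) < Cardinal.mk X := lt_of_lt_of_le (by norm_num) h3
      have : Nontrivial X := Cardinal.one_lt_iff_nontrivial.mp h1
      obtain ⟨y, hy⟩ := exists_ne w
      obtain ⟨z, hz1, hz2⟩ := Cardinal.three_le h3 w y
      exact ⟨w, y, z, hy.symm, fun h => hz2 h.symm, fun h => hz1 h.symm,
        key w y y z hy.symm (fun h => hz2 h.symm),
        key y z z w (fun h => hz2 h.symm) hz1⟩
    · intro Φ x y u v
      rw [hchar, hchar]
      simp [Φ.injective.eq_iff]
  · rintro ⟨⟨x₁, x₂, x₃, h12, h23, h13, e1, e2⟩, hΦ⟩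
    -- step 1: distances from x₂ are all equal to d x₁ x₂
    have step1 : ∀ y : X, y ≠ x₂ → d x₂ y = d x₁ x₂ := by
      intro y hy
      by_cases hy1 : y = x₁
      · rw [hy1, dsymm]
      by_cases hy3 : y = x₃
      · rw [hy3]; exact e1.symm
      · have h := (hΦ (Equiv.swap x₃ y) x₁ x₂ x₂ x₃).mp e1
        rw [Equiv.swap_apply_of_ne_of_ne h13 (fun h => hy1 h.symm),
          Equiv.swap_apply_of_ne_of_ne h23 (fun h => hy h.symm),
          Equiv.swap_apply_left] at h
        exact h.symm
    have step2 : ∀ a b : X, a ≠ b → d a b = d x₁ x₂ := by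
      intro a b hab
      by_cases ha : a = x₂
      · rw [ha]; exact step1 b (fun h => hab (ha.trans h.symm))
      by_cases hb : b = x₂
      · rw [hb, dsymm]; exact step1 a (fun h => ha h)
      · have e : d a x₂ = d x₂ b := by
          rw [dsymm a x₂, step1 a ha, step1 b hb]
        have h := (hΦ (Equiv.swap x₂ b) a x₂ x₂ b).mp e
        rw [Equiv.swap_apply_of_ne_of_ne ha hab, Equiv.swap_apply_left,
          Equiv.swap_apply_right] at h
        rw [h, dsymm]
        exact step1 b hb
    have hsub : Set.range (Function.uncurry d) ⊆ ({0, d x₁ x₂} : Set ℝ) := by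
      rintro t ⟨⟨p, q⟩, rfl⟩
      by_cases hpq : p = q
      · left
        exact (dzero p q).mpr hpq
      · right
        exact step2 p q hpq
    calc Cardinal.mk (Set.range (Function.uncurry d))
        ≤ Cardinal.mk ({0, d x₁ x₂} : Set ℝ) := Cardinal.mk_le_mk_of_subset hsub
      _ ≤ Cardinal.mk ({d x₁ x₂} : Set ℝ) + 1 := Cardinal.mk_insert_le
      _ = 2 := by rw [Cardinal.mk_singleton]; norm_num
end

section
/- Let (X,d) be a nonempty semimetric space. Every permutation of X is a combinatorial self similarity of (X,d) if and only if at least one of the following holds: (a) d is strongly rigid; (b) d is discrete; (c) (X,d) is weakly rigid and all three-point subspaces of (X,d) are isometric to each other. -/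
open Cardinal

lemma ext_perm {X : Type*} : ∀ (n : ℕ) (f g : Fin n → X), Function.Injective f → Function.Injective g →
    ∃ Φ : Equiv.Perm X, (∀ i, Φ (f i) = g i) ∧
      ∀ w, w ∉ Set.range f → w ∉ Set.range g → Φ w = w := by
  intro n
  induction n with
  | zero => exact fun f g _ _ => ⟨1, fun i => i.elim0, fun _ _ _ => rfl⟩
  | succ n ih =>
    intro f g hf hg
    classical
    set Φ₁ : Equiv.Perm X := Equiv.swap (f 0) (g 0) with hΦ₁
    obtain ⟨Ψ, hΨ, hΨfix⟩ := ih (fun i => Φ₁ (f i.succ)) (fun i => g i.succ)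
      (Φ₁.injective.comp (hf.comp (Fin.succ_injective n)))
      (hg.comp (Fin.succ_injective n))
    have hg0f : g 0 ∉ Set.range (fun i : Fin n => Φ₁ (f i.succ)) := by
      rintro ⟨i, hi⟩
      have : f i.succ = Φ₁.symm (g 0) := by
        rw [← hi]; simp
      rw [hΦ₁, Equiv.symm_swap, Equiv.swap_apply_right] at this
      exact Fin.succ_ne_zero i (hf this)
    have hg0g : g 0 ∉ Set.range (fun i : Fin n => g i.succ) := by
      rintro ⟨i, hi⟩
      exact Fin.succ_ne_zero i (hg hi)
    refine ⟨Φ₁.trans Ψ, ?_, ?_⟩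
    · intro i
      refine Fin.cases ?_ (fun j => ?_) i
      · have h1 : Φ₁ (f 0) = g 0 := Equiv.swap_apply_left _ _
        simp only [Equiv.trans_apply, h1]
        exact hΨfix _ hg0f hg0g
      · simpa using hΨ j
    · intro w hwf hwg
      have hw1 : Φ₁ w = w := by
        apply Equiv.swap_apply_of_ne_of_ne
        · exact fun h => hwf ⟨0, h.symm⟩
        · exact fun h => hwg ⟨0, h.symm⟩
      simp only [Equiv.trans_apply, hw1]
      apply hΨfix
      · rintro ⟨i, hi⟩
        have hsymw : Φ₁.symm w = w := (Equiv.symm_apply_eq _).mpr hw1.symm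
        have : f i.succ = w := by
          rw [← hsymw, ← hi]; simp
        exact hwf ⟨i.succ, this⟩
      · rintro ⟨i, hi⟩
        exact hwg ⟨i.succ, hi⟩

lemma aux_one_dir {X : Type*} (d : X → X → ℝ)
    (h : ∀ Φ : Equiv.Perm X, ∀ x y u v : X, d x y = d u v → d (Φ x) (Φ y) = d (Φ u) (Φ v)) :
    ∀ Φ : Equiv.Perm X, CombSelfSim d Φ := by
  intro Φ x y u v
  refine ⟨h Φ x y u v, fun hh => ?_⟩
  have := h Φ⁻¹ _ _ _ _ hh
  simpa using this

lemma iso_of_perm {X : Type*} (d : X → X → ℝ) (Φ : Equiv.Perm X)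
    (hiso : ∀ x y, d (Φ x) (Φ y) = d x y) (A B : Set X) (h : ∀ x, x ∈ A ↔ Φ x ∈ B) :
    IsometricSubsets d A B := by
  refine ⟨⟨fun a => ⟨Φ a, (h a).1 a.2⟩, fun b => ⟨Φ.symm b, ?_⟩, ?_, ?_⟩, ?_⟩
  · rw [h]; simpa using b.2
  · intro a; simp
  · intro b; simp
  · intro a b; exact hiso a b

lemma disc_no_three {X : Type*} (d : X → X → ℝ) (hdisc : DiscreteSemimetric d) {a b c : ℝ}
    (ha : a ∈ Set.range (Function.uncurry d)) (hb : b ∈ Set.range (Function.uncurry d))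
    (hc : c ∈ Set.range (Function.uncurry d)) (hab : a ≠ b) (hac : a ≠ c) (hbc : b ≠ c) :
    False := by
  have hdisc' : Cardinal.mk (Set.range (Function.uncurry d)) ≤ 2 := hdisc
  have hfin : Finite ↥(Set.range (Function.uncurry d)) := by
    rw [← Cardinal.lt_aleph0_iff_finite]
    exact lt_of_le_of_lt hdisc' (by exact_mod_cast Cardinal.nat_lt_aleph0 2)
  have hfin' : (Set.range (Function.uncurry d)).Finite := Set.finite_coe_iff.mp hfin
  have h5 : Nat.card ↥(Set.range (Function.uncurry d)) ≤ 2 := by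
    have := Cardinal.toNat_le_toNat hdisc' (by exact_mod_cast Cardinal.nat_lt_aleph0 2)
    simpa [Nat.card] using this
  rw [Nat.card_coe_set_eq] at h5
  have h3 : ({a, b, c} : Set ℝ).ncard = 3 := Set.ncard_eq_three.mpr ⟨a, b, c, hab, hac, hbc, rfl⟩
  have h4 : ({a, b, c} : Set ℝ) ⊆ Set.range (Function.uncurry d) := by
    intro w hw
    simp only [Set.mem_insert_iff, Set.mem_singleton_iff] at hw
    rcases hw with rfl|rfl|rfl <;> assumption
  have := Set.ncard_le_ncard h4 hfin'
  omega

lemma dist_mem_of_iso {X : Type*} (d : X → X → ℝ) (hsym : ∀ a b, d a b = d b a)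
    {x y u p q r : X} (hpq : p ≠ q)
    (hiso : IsometricSubsets d {x, y, u} {p, q, r}) :
    d p q = d x y ∨ d p q = d x u ∨ d p q = d y u := by
  obtain ⟨e, he⟩ := hiso
  have hp : p ∈ ({p, q, r} : Set X) := by simp
  have hq : q ∈ ({p, q, r} : Set X) := by simp
  have hPe : e (e.symm ⟨p, hp⟩) = ⟨p, hp⟩ := e.apply_symm_apply _
  have hQe : e (e.symm ⟨q, hq⟩) = ⟨q, hq⟩ := e.apply_symm_apply _
  have h1 : d p q = d (↑(e.symm ⟨p, hp⟩)) (↑(e.symm ⟨q, hq⟩)) := by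
    have h := he (e.symm ⟨p, hp⟩) (e.symm ⟨q, hq⟩)
    rw [hPe, hQe] at h
    simpa using h
  have hne : (↑(e.symm ⟨p, hp⟩) : X) ≠ ↑(e.symm ⟨q, hq⟩) := by
    intro hh
    have h2 : (⟨p, hp⟩ : ({p, q, r} : Set X)) = ⟨q, hq⟩ := by
      rw [← hPe, ← hQe, Subtype.ext hh]
    exact hpq (congrArg Subtype.val h2)
  have hPm := (e.symm ⟨p, hp⟩).2
  have hQm := (e.symm ⟨q, hq⟩).2
  simp only [Set.mem_insert_iff, Set.mem_singleton_iff] at hPm hQm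
  rcases hPm with hh|hh|hh <;> rcases hQm with hh'|hh'|hh' <;> rw [hh, hh'] at h1 hne <;>
    first
      | exact absurd rfl hne
      | exact Or.inl h1
      | exact Or.inr (Or.inl h1)
      | exact Or.inr (Or.inr h1)
      | exact Or.inl (h1.trans (hsym _ _))
      | exact Or.inr (Or.inl (h1.trans (hsym _ _)))
      | exact Or.inr (Or.inr (h1.trans (hsym _ _)))

lemma four_point_eq {X : Type*} (d : X → X → ℝ) (hsym : ∀ a b, d a b = d b a)
    (hWR : WeaklyRigid d)
    (hiso3 : ∀ A B : Set X, A.ncard = 3 → B.ncard = 3 → IsometricSubsets d A B)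
    {x y u v : X} (hxy : x ≠ y) (hxu : x ≠ u) (hxv : x ≠ v)
    (hyu : y ≠ u) (hyv : y ≠ v) (huv : u ≠ v) : d x y = d u v := by
  have n3 : ∀ a b c : X, a ≠ b → a ≠ c → b ≠ c → ({a, b, c} : Set X).ncard = 3 :=
    fun a b c h1 h2 h3 => Set.ncard_eq_three.mpr ⟨a, b, c, h1, h2, h3, rfl⟩
  have M2 : d y u = d x y ∨ d y u = d x v ∨ d y u = d y v :=
    dist_mem_of_iso d hsym hyu
      (hiso3 {x, y, v} {y, u, x} (n3 _ _ _ hxy hxv hyv) (n3 _ _ _ hyu (Ne.symm hxy) (Ne.symm hxu)))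
  have M1 : d u v = d x y ∨ d u v = d x u ∨ d u v = d y u :=
    dist_mem_of_iso d hsym huv
      (hiso3 {x, y, u} {u, v, x} (n3 _ _ _ hxy hxu hyu) (n3 _ _ _ huv (Ne.symm hxu) (Ne.symm hxv)))
  obtain ⟨w1, w2, w3⟩ := hWR x y u hxy hyu hxu
  obtain ⟨w4, w5, w6⟩ := hWR u y v (Ne.symm hyu) hyv huv
  obtain ⟨w7, w8, w9⟩ := hWR x u v hxu huv hxv
  have hyu_eq : d y u = d x v := by
    rcases M2 with h|h|h
    · exact absurd h.symm w1
    · exact h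
    · exact absurd ((hsym u y).trans h) w4
  have huv_eq : d u v = d x y := by
    rcases M1 with h|h|h
    · exact h
    · exact absurd h.symm w7
    · exact absurd (h.trans (hyu_eq.trans (hsym x v))) w8
  exact huv_eq.symm

lemma third_elt {X : Type*} {S : Set X} {p q : X} (hS : S.ncard = 3) (hp : p ∈ S) (hq : q ∈ S)
    (hpq : p ≠ q) : ∃ s, s ≠ p ∧ s ≠ q ∧ S = {p, q, s} := by
  obtain ⟨a, b, c, hab, hac, hbc, rfl⟩ := Set.ncard_eq_three.mp hS
  simp only [Set.mem_insert_iff, Set.mem_singleton_iff] at hp hq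
  rcases hp with rfl|rfl|rfl <;> rcases hq with rfl|rfl|rfl <;>
    first
      | exact absurd rfl hpq
      | exact ⟨c, hac.symm, hbc.symm, rfl⟩
      | exact ⟨b, hab.symm, hbc, by ext w; simp; tauto⟩
      | exact ⟨c, hbc.symm, hac.symm, by ext w; simp; tauto⟩
      | exact ⟨a, hab, hac, by ext w; simp; tauto⟩
      | exact ⟨b, hbc, hab.symm, by ext w; simp; tauto⟩
      | exact ⟨a, hac, hab, by ext w; simp; tauto⟩

set_option maxHeartbeats 1000000 in
theorem stmt13 {X : Type*} [Nonempty X] (d : X → X → ℝ) (hd : IsSemimetric d) :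
    (∀ Φ : Equiv.Perm X, CombSelfSim d Φ) ↔
      (StronglyRigid d ∨ DiscreteSemimetric d ∨
        (WeaklyRigid d ∧
          ∀ A B : Set X, A.ncard = 3 → B.ncard = 3 → IsometricSubsets d A B)) := by
  obtain ⟨hsym, hpos, heq0⟩ := hd
  have h0 : ∀ x, d x x = 0 := fun x => (heq0 x x).mpr rfl
  constructor
  · -- forward
    intro H
    by_cases hDisc : DiscreteSemimetric d
    · exact Or.inr (Or.inl hDisc)
    by_cases hSR : StronglyRigid d
    · exact Or.inl hSR
    refine Or.inr (Or.inr ?_)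
    classical
    have inj3 : ∀ a b c : X, a ≠ b → a ≠ c → b ≠ c → Function.Injective ![a, b, c] := by
      intro a b c h1 h2 h3 i j hij
      fin_cases i <;> fin_cases j <;> simp_all
    have inj4 : ∀ a b c e : X, a ≠ b → a ≠ c → a ≠ e → b ≠ c → b ≠ e → c ≠ e →
        Function.Injective ![a, b, c, e] := by
      intro a b c e h1 h2 h3 h4 h5 h6 i j hij
      fin_cases i <;> fin_cases j <;> simp_all
    have hom3 : ∀ a b c a' b' c' : X, a ≠ b → a ≠ c → b ≠ c → a' ≠ b' → a' ≠ c' → b' ≠ c' →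
        d a b = d b c → d a' b' = d b' c' := by
      intro a b c a' b' c' h1 h2 h3 h4 h5 h6 hdd
      obtain ⟨Φ, hΦ, -⟩ := ext_perm 3 ![a, b, c] ![a', b', c'] (inj3 _ _ _ h1 h2 h3)
        (inj3 _ _ _ h4 h5 h6)
      have e0 := hΦ 0
      have e1 := hΦ 1
      have e2 := hΦ 2
      simp only [Matrix.cons_val_zero, Matrix.cons_val_one, Matrix.head_cons,
        Matrix.cons_val_two, Matrix.tail_cons] at e0 e1 e2
      have h := (H Φ a b b c).mp hdd
      rwa [e0, e1, e2] at h
    have hom4 : ∀ a b c e a' b' c' e' : X, a ≠ b → a ≠ c → a ≠ e → b ≠ c → b ≠ e → c ≠ e →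
        a' ≠ b' → a' ≠ c' → a' ≠ e' → b' ≠ c' → b' ≠ e' → c' ≠ e' →
        d a b = d c e → d a' b' = d c' e' := by
      intro a b c e a' b' c' e' h1 h2 h3 h4 h5 h6 g1 g2 g3 g4 g5 g6 hdd
      obtain ⟨Φ, hΦ, -⟩ := ext_perm 4 ![a, b, c, e] ![a', b', c', e']
        (inj4 _ _ _ _ h1 h2 h3 h4 h5 h6) (inj4 _ _ _ _ g1 g2 g3 g4 g5 g6)
      have e0 := hΦ 0
      have e1 := hΦ 1
      have e2 := hΦ 2
      have e3 := hΦ 3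
      simp only [Matrix.cons_val_zero, Matrix.cons_val_one, Matrix.head_cons,
        Matrix.cons_val_two, Matrix.tail_cons, Matrix.cons_val_three] at e0 e1 e2 e3
      have h := (H Φ a b c e).mp hdd
      rwa [e0, e1, e2, e3] at h
    have hWR : WeaklyRigid d := by
      by_contra hnWR
      simp only [WeaklyRigid, not_forall] at hnWR
      push_neg at hnWR
      obtain ⟨x, y, z, hxy, hyz, hxz, hviol⟩ := hnWR
      have hadjw : ∃ a b c : X, a ≠ b ∧ b ≠ c ∧ a ≠ c ∧ d a b = d b c := by
        by_cases h1 : d x y = d y z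
        · exact ⟨x, y, z, hxy, hyz, hxz, h1⟩
        · by_cases h2 : d y z = d z x
          · exact ⟨y, z, x, hyz, Ne.symm hxz, Ne.symm hxy, h2⟩
          · exact ⟨z, x, y, Ne.symm hxz, hxy, Ne.symm hyz, hviol h1 h2⟩
      obtain ⟨a0, b0, c0, hab0, hbc0, hac0, hd0⟩ := hadjw
      have adj : ∀ a b c : X, a ≠ b → b ≠ c → a ≠ c → d a b = d b c := by
        intro a b c h1 h2 h3
        exact hom3 a0 b0 c0 a b c hab0 hac0 hbc0 h1 h3 h2 hd0
      have alln : ∀ p q r s : X, p ≠ q → r ≠ s → d p q = d r s := by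
        intro p q r s hpq hrs
        by_cases hpr : p = r
        · subst hpr
          by_cases hqs : q = s
          · subst hqs; rfl
          · rw [hsym p q]
            exact adj q p s (Ne.symm hpq) hrs hqs
        · by_cases hps : p = s
          · subst hps
            by_cases hqr : q = r
            · subst hqr; exact hsym _ _
            · rw [hsym p q, hsym r p]
              exact adj q p r (Ne.symm hpq) (fun h => hpr h) hqr
          · by_cases hqr : q = r
            · subst hqr
              exact adj p q s hpq hrs hps
            · by_cases hqs : q = s
              · subst hqs
                rw [hsym r q]
                exact adj p q r hpq hqr hpr
              · calc d p q = d q r := adj p q r hpq hqr hpr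
                  _ = d r s := adj q r s hqr hrs hqs
      apply hDisc
      have hsub : Set.range (Function.uncurry d) ⊆ {0, d a0 b0} := by
        rintro w ⟨⟨p, q⟩, rfl⟩
        simp only [Function.uncurry_apply_pair, Set.mem_insert_iff, Set.mem_singleton_iff]
        by_cases h : p = q
        · exact Or.inl (by rw [h]; exact h0 q)
        · exact Or.inr (alln p q a0 b0 h hab0)
      refine le_trans (Cardinal.mk_le_mk_of_subset hsub) ?_
      refine le_trans Cardinal.mk_insert_le ?_
      rw [Cardinal.mk_singleton]
      exact le_of_eq one_add_one_eq_two
    simp only [StronglyRigid, not_forall] at hSR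
    push_neg at hSR
    obtain ⟨x0, y0, u0, v0, heqd, hne0, hno⟩ := hSR
    have hx0y0 : x0 ≠ y0 := fun h => hne0 (by rw [h, h0])
    have hu0v0 : u0 ≠ v0 := fun h => hne0 (by rw [heqd, h, h0])
    have hx0u0 : x0 ≠ u0 := by
      intro h
      subst h
      exact (hWR y0 x0 v0 (Ne.symm hx0y0) hu0v0 (hno.1 rfl)).1 ((hsym y0 x0).trans heqd)
    have hx0v0 : x0 ≠ v0 := by
      intro h
      subst h
      exact (hWR y0 x0 u0 (Ne.symm hx0y0) hx0u0 (hno.2 rfl)).1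
        (((hsym y0 x0).trans heqd).trans (hsym u0 x0))
    have hy0u0 : y0 ≠ u0 := by
      intro h
      subst h
      exact (hWR x0 y0 v0 hx0y0 hu0v0 hx0v0).1 heqd
    have hy0v0 : y0 ≠ v0 := by
      intro h
      subst h
      exact (hWR x0 y0 u0 hx0y0 hy0u0 hx0u0).1 (heqd.trans (hsym u0 y0))
    have key : ∀ a b c e : X, a ≠ b → a ≠ c → a ≠ e → b ≠ c → b ≠ e → c ≠ e →
        d a b = d c e := fun a b c e h1 h2 h3 h4 h5 h6 =>
      hom4 x0 y0 u0 v0 a b c e hx0y0 hx0u0 hx0v0 hy0u0 hy0v0 hu0v0 h1 h2 h3 h4 h5 h6 heqd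
    have hfive : ∀ p q r s t : X, p ≠ q → p ≠ r → p ≠ s → p ≠ t → q ≠ r → q ≠ s → q ≠ t →
        r ≠ s → r ≠ t → s ≠ t → False := by
      intro p q r s t hpq hpr hps hpt hqr hqs hqt hrs hrt hst
      have h1 : d p q = d s t := key p q s t hpq hps hpt hqs hqt hst
      have h2 : d q r = d s t := key q r s t hqr hqs hqt hrs hrt hst
      exact (hWR p q r hpq hqr hpr).1 (h1.trans h2.symm)
    have hall : ∀ w : X, w = x0 ∨ w = y0 ∨ w = u0 ∨ w = v0 := by
      intro w
      by_contra hw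
      push_neg at hw
      exact hfive x0 y0 u0 v0 w hx0y0 hx0u0 hx0v0 (Ne.symm hw.1) hy0u0 hy0v0 (Ne.symm hw.2.1)
        hu0v0 (Ne.symm hw.2.2.1) (Ne.symm hw.2.2.2)
    refine ⟨hWR, ?_⟩
    intro A B hA hB
    have hsubU : ∀ S : Set X, S ⊆ {x0, y0, u0, v0} := by
      intro S w _
      rcases hall w with rfl|rfl|rfl|rfl <;> simp
    have hfin4 : ({x0, y0, u0, v0} : Set X).Finite :=
      (((Set.finite_singleton v0).insert u0).insert y0).insert x0
    have hAfin : A.Finite := hfin4.subset (hsubU A)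
    have hBfin : B.Finite := hfin4.subset (hsubU B)
    have hU4 : (A ∪ B).ncard ≤ 4 := by
      have h1 := Set.ncard_le_ncard (hsubU (A ∪ B)) hfin4
      have c1 := Set.ncard_insert_le x0 ({y0, u0, v0} : Set X)
      have c2 := Set.ncard_insert_le y0 ({u0, v0} : Set X)
      have c3 := Set.ncard_insert_le u0 ({v0} : Set X)
      have c4 : ({v0} : Set X).ncard = 1 := Set.ncard_singleton _
      omega
    have hI2 : 1 < (A ∩ B).ncard := by
      have hun := Set.ncard_union_add_ncard_inter A B hAfin hBfin
      omega
    obtain ⟨p, q, hpI, hqI, hpq⟩ := (Set.one_lt_ncard_iff (hAfin.inter_of_left B)).mp hI2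
    obtain ⟨s, hsp, hsq, hAeq⟩ := third_elt hA hpI.1 hqI.1 hpq
    obtain ⟨t, htp, htq, hBeq⟩ := third_elt hB hpI.2 hqI.2 hpq
    rw [hAeq, hBeq]
    by_cases hst : s = t
    · subst hst
      exact iso_of_perm d 1 (fun _ _ => rfl) _ _ (fun w => Iff.rfl)
    · have hqp : q ≠ p := Ne.symm hpq
      have hps : p ≠ s := Ne.symm hsp
      have hqs : q ≠ s := Ne.symm hsq
      have hpt : p ≠ t := Ne.symm htp
      have hqt : q ≠ t := Ne.symm htq
      have hts : t ≠ s := Ne.symm hst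
      set Φ : Equiv.Perm X := (Equiv.swap p q).trans (Equiv.swap s t) with hΦdef
      have hΦp : Φ p = q := by
        rw [hΦdef, Equiv.trans_apply, Equiv.swap_apply_left,
          Equiv.swap_apply_of_ne_of_ne hqs hqt]
      have hΦq : Φ q = p := by
        rw [hΦdef, Equiv.trans_apply, Equiv.swap_apply_right,
          Equiv.swap_apply_of_ne_of_ne hps hpt]
      have hΦs : Φ s = t := by
        rw [hΦdef, Equiv.trans_apply, Equiv.swap_apply_of_ne_of_ne hsp hsq,
          Equiv.swap_apply_left]
      have hΦt : Φ t = s := by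
        rw [hΦdef, Equiv.trans_apply, Equiv.swap_apply_of_ne_of_ne htp htq,
          Equiv.swap_apply_right]
      have hall4 : ∀ w : X, w = p ∨ w = q ∨ w = s ∨ w = t := by
        intro w
        by_contra hw
        push_neg at hw
        exact hfive p q s t w hpq hps hpt (Ne.symm hw.1) hqs hqt (Ne.symm hw.2.1) hst
          (Ne.symm hw.2.2.1) (Ne.symm hw.2.2.2)
      have hisoΦ : ∀ a b : X, d (Φ a) (Φ b) = d a b := by
        intro a b
        rcases hall4 a with rfl|rfl|rfl|rfl <;> rcases hall4 b with rfl|rfl|rfl|rfl <;>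
          simp only [hΦp, hΦq, hΦs, hΦt] <;>
          first
            | rw [h0, h0]
            | exact hsym _ _
            | (apply key <;> assumption)
      have hmem : ∀ w : X, w ∈ ({p, q, s} : Set X) ↔ Φ w ∈ ({p, q, t} : Set X) := by
        intro w
        rcases hall4 w with rfl|rfl|rfl|rfl <;>
          simp only [hΦp, hΦq, hΦs, hΦt, Set.mem_insert_iff, Set.mem_singleton_iff] <;>
          tauto
      exact iso_of_perm d Φ hisoΦ _ _ hmem
  · -- backward
    intro H
    apply aux_one_dir
    intro Φ x y u v hxyuv
    rcases H with hSR | hDisc | ⟨hWR, hIso⟩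
    · by_cases hz : d x y = 0
      · have hxy : x = y := (heq0 _ _).mp hz
        have huv : u = v := (heq0 _ _).mp (by rw [← hxyuv]; exact hz)
        subst hxy
        subst huv
        rw [h0, h0]
      · rcases hSR x y u v hxyuv hz with ⟨rfl, rfl⟩ | ⟨rfl, rfl⟩
        · rfl
        · exact hsym _ _
    · have key2 : ∀ a b c e : X, a ≠ b → c ≠ e → d a b = d c e := by
        intro a b c e hab hce
        by_contra hne
        have h0m : (0 : ℝ) ∈ Set.range (Function.uncurry d) := ⟨(a, a), h0 a⟩
        exact disc_no_three d hDisc h0m ⟨(a, b), rfl⟩ ⟨(c, e), rfl⟩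
          (fun h => hab ((heq0 a b).mp h.symm)) (fun h => hce ((heq0 c e).mp h.symm)) hne
      by_cases hxy : x = y
      · subst hxy
        have huv : u = v := (heq0 u v).mp (hxyuv.symm.trans (h0 x))
        subst huv
        rw [h0, h0]
      · have huv : u ≠ v := fun h => hxy ((heq0 x y).mp (by rw [hxyuv, h, h0]))
        exact key2 _ _ _ _ (fun h => hxy (Φ.injective h)) (fun h => huv (Φ.injective h))
    · by_cases hxy : x = y
      · subst hxy
        have huv : u = v := (heq0 u v).mp (hxyuv.symm.trans (h0 x))
        subst huv
        rw [h0, h0]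
      · have huv : u ≠ v := fun h => hxy ((heq0 x y).mp (by rw [hxyuv, h, h0]))
        by_cases hxu : x = u
        · subst hxu
          by_cases hyv : y = v
          · subst hyv; rfl
          · exact absurd ((hsym y x).trans hxyuv)
              (hWR y x v (Ne.symm hxy) huv hyv).1
        · by_cases hxv : x = v
          · subst hxv
            by_cases hyu : y = u
            · subst hyu; exact hsym _ _
            · exact absurd ((hsym y x).trans (hxyuv.trans (hsym u x)))
                (hWR y x u (Ne.symm hxy) (Ne.symm huv) hyu).1
          · by_cases hyu : y = u
            · subst hyu
              exact absurd hxyuv (hWR x y v hxy huv hxv).1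
            · by_cases hyv : y = v
              · subst hyv
                exact absurd (hxyuv.trans (hsym u y)) (hWR x y u hxy (Ne.symm huv) hxu).1
              · exact four_point_eq d hsym hWR hIso
                  (fun h => hxy (Φ.injective h)) (fun h => hxu (Φ.injective h))
                  (fun h => hxv (Φ.injective h)) (fun h => hyu (Φ.injective h))
                  (fun h => hyv (Φ.injective h)) (fun h => huv (Φ.injective h))
end

section
/- For a nonempty set X, the following are equivalent: (1) |X| = 4; (2) there exists a semimetric d on X such that every permutation of X is a combinatorial self similarity of (X,d), but d is neither strongly rigid nor discrete. -/
open Cardinal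

/-!
If every permutation is a combinatorial self similarity, transpositions let us move any endpoint
of a pair to a fresh point without changing the distance. Hence equal distances on two
pairs sharing a point force all nonzero distances to coincide, i.e. `d` is discrete. So if `d` is
neither strongly rigid nor discrete, there are two disjoint pairs `{x, y}`, `{u, v}` at equal
distance, and a fifth point `w` would give the equal distances `d v u = d v w`; thus `|X| = 4`.
Conversely, on four points labelled by the Klein four-group `{0,1,2,3}` under `xor`, the distance
`i xor j` takes the nonzero value `k` exactly on the two pairs of the `k`-th perfect matching, and
every permutation of the four points permutes the three perfect matchings.
-/

section Transport

variable {X Y : Type*}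

theorem IsSemimetric.comp_injective {d : Y → Y → ℝ} (hd : IsSemimetric d) {f : X → Y}
    (hf : Function.Injective f) : IsSemimetric (fun x y => d (f x) (f y)) :=
  ⟨fun x y => hd.1 (f x) (f y), fun x y => hd.2.1 (f x) (f y),
    fun x y => (hd.2.2 (f x) (f y)).trans hf.eq_iff⟩

theorem combSelfSim_comp_equiv {d : Y → Y → ℝ} (hd : ∀ Ψ : Equiv.Perm Y, CombSelfSim d Ψ)
    (e : X ≃ Y) (Φ : Equiv.Perm X) : CombSelfSim (fun x y => d (e x) (e y)) Φ := by
  intro x y u v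
  simpa only [Equiv.permCongr_apply, Equiv.symm_apply_apply] using
    hd (e.permCongr Φ) (e x) (e y) (e u) (e v)

theorem StronglyRigid.of_comp_equiv {d : Y → Y → ℝ} (e : X ≃ Y)
    (hd : StronglyRigid (fun x y => d (e x) (e y))) : StronglyRigid d := by
  intro x y u v h hne
  have := hd (e.symm x) (e.symm y) (e.symm u) (e.symm v)
  simp only [Equiv.apply_symm_apply, e.symm.injective.eq_iff] at this
  exact this h hne

theorem discreteSemimetric_comp_equiv_iff {d : Y → Y → ℝ} (e : X ≃ Y) :
    DiscreteSemimetric (fun x y => d (e x) (e y)) ↔ DiscreteSemimetric d := by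
  have : Function.uncurry (fun x y => d (e x) (e y)) = Function.uncurry d ∘ Prod.map e e := rfl
  rw [DiscreteSemimetric, DiscreteSemimetric, this,
    (e.surjective.prodMap e.surjective).range_comp]

end Transport

section KleinFour

def kleinDist (i j : Fin 4) : ℝ := ((i.val ^^^ j.val : ℕ) : ℝ)

theorem isSemimetric_kleinDist : IsSemimetric kleinDist := by
  refine ⟨fun i j => ?_, fun i j => Nat.cast_nonneg _, fun i j => ?_⟩
  · rw [kleinDist, kleinDist, Nat.xor_comm]
  · rw [kleinDist, Nat.cast_eq_zero]
    revert i j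
    decide

set_option maxHeartbeats 1000000 in
theorem combSelfSim_kleinDist (Φ : Equiv.Perm (Fin 4)) : CombSelfSim kleinDist Φ := by
  simp only [CombSelfSim, kleinDist, Nat.cast_inj]
  revert Φ
  decide

theorem not_stronglyRigid_kleinDist : ¬StronglyRigid kleinDist := by
  intro h
  have := h 0 1 2 3 (by simp only [kleinDist, Nat.cast_inj]; decide) (by norm_num [kleinDist])
  simp at this

theorem not_discreteSemimetric_kleinDist : ¬DiscreteSemimetric kleinDist := by
  intro h
  let f : Fin 3 → Set.range (Function.uncurry kleinDist) :=
    fun k => ⟨k.val, ⟨(0, k.castSucc), by simp [kleinDist]⟩⟩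
  have hf : Function.Injective f := fun i j hij =>
    Fin.val_injective (Nat.cast_injective (congrArg Subtype.val hij : ((i : ℕ) : ℝ) = j))
  have := (Cardinal.mk_le_of_injective hf).trans h
  norm_num at this

end KleinFour

section SelfSimilar

variable {X : Type*} {d : X → X → ℝ}

theorem dist_eq_dist_of_swap (hsim : ∀ Φ : Equiv.Perm X, CombSelfSim d Φ) {x y u v w : X}
    (h : d x y = d u v) (hxu : x ≠ u) (hxw : x ≠ w) (hyu : y ≠ u) (hyw : y ≠ w) (hvu : v ≠ u)
    (hvw : v ≠ w) : d x y = d w v := by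
  classical
  have := (hsim (Equiv.swap u w) x y u v).mp h
  rwa [Equiv.swap_apply_of_ne_of_ne hxu hxw, Equiv.swap_apply_of_ne_of_ne hyu hyw,
    Equiv.swap_apply_left, Equiv.swap_apply_of_ne_of_ne hvu hvw] at this

theorem discreteSemimetric_of_forall_ne_dist_eq (hdiag : ∀ x, d x x = 0) (r : ℝ)
    (h : ∀ p q, p ≠ q → d p q = r) : DiscreteSemimetric d := by
  have hsub : Set.range (Function.uncurry d) ⊆ {0, r} := by
    rintro _ ⟨⟨p, q⟩, rfl⟩
    by_cases hpq : p = q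
    · left; simp [hpq, hdiag]
    · right; exact h p q hpq
  calc #(Set.range (Function.uncurry d)) ≤ #({0, r} : Set ℝ) := mk_le_mk_of_subset hsub
    _ ≤ #({r} : Set ℝ) + 1 := mk_insert_le
    _ = 2 := by rw [mk_singleton, one_add_one_eq_two]

theorem discreteSemimetric_of_dist_eq_dist (hsym : ∀ x y, d x y = d y x)
    (hdiag : ∀ x, d x x = 0) (hsim : ∀ Φ : Equiv.Perm X, CombSelfSim d Φ) {a b c : X}
    (hac : a ≠ c) (hbc : b ≠ c) (h : d a b = d a c) : DiscreteSemimetric d := by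
  classical
  have from_a : ∀ w, w ≠ a → d a w = d a b := by
    intro w hwa
    by_cases hwb : w = b
    · rw [hwb]
    by_cases hwc : w = c
    · rw [hwc, h]
    rw [hsym a w]
    exact (dist_eq_dist_of_swap hsim (h.trans (hsym a c)) hac (Ne.symm hwa) hbc (Ne.symm hwb)
      hac (Ne.symm hwa)).symm
  refine discreteSemimetric_of_forall_ne_dist_eq hdiag (d a b) fun p q hpq => ?_
  by_cases hpa : p = a
  · exact hpa ▸ from_a q (hpa ▸ Ne.symm hpq)
  by_cases hqa : q = a
  · rw [hqa, hsym, from_a p hpa]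
  -- the transposition of `a` and `p` carries `d a q = d a p` to `d p q = d p a`
  have := (hsim (Equiv.swap a p) a q a p).mp ((from_a q hqa).trans (from_a p hpa).symm)
  rw [Equiv.swap_apply_left, Equiv.swap_apply_of_ne_of_ne hqa (Ne.symm hpq),
    Equiv.swap_apply_right] at this
  rw [this, hsym, from_a p hpa]

theorem exists_pairwise_ne_dist_eq (hd : IsSemimetric d)
    (hsim : ∀ Φ : Equiv.Perm X, CombSelfSim d Φ) (hSR : ¬StronglyRigid d)
    (hD : ¬DiscreteSemimetric d) :
    ∃ x y u v, x ≠ y ∧ x ≠ u ∧ x ≠ v ∧ y ≠ u ∧ y ≠ v ∧ u ≠ v ∧ d x y = d u v := by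
  obtain ⟨hsym, -, hzero⟩ := hd
  have hdiag : ∀ x, d x x = 0 := fun x => (hzero x x).mpr rfl
  simp only [StronglyRigid, not_forall, not_or, not_and] at hSR
  obtain ⟨x, y, u, v, h, hne, hxuyv, hxvyu⟩ := hSR
  have hxy : x ≠ y := fun hxy => hne ((hzero x y).mpr hxy)
  have huv : u ≠ v := fun huv => hne (h.trans ((hzero u v).mpr huv))
  have cherry := @discreteSemimetric_of_dist_eq_dist X d hsym hdiag hsim
  refine ⟨x, y, u, v, hxy, fun hxu => ?_, fun hxv => ?_, fun hyu => ?_, fun hyv => ?_, huv, h⟩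
  · subst hxu
    exact hD (cherry huv (hxuyv rfl) h)
  · subst hxv
    exact hD (cherry (Ne.symm huv) (hxvyu rfl) (h.trans (hsym u x)))
  · subst hyu
    exact hD (cherry huv (fun hxv => hxvyu hxv rfl) ((hsym y x).trans h))
  · subst hyv
    exact hD (cherry (Ne.symm huv) (fun hxu => hxuyv hxu rfl)
      ((hsym y x).trans (h.trans (hsym u y))))

theorem nat_card_eq_four_of_not_stronglyRigid (hd : IsSemimetric d)
    (hsim : ∀ Φ : Equiv.Perm X, CombSelfSim d Φ) (hSR : ¬StronglyRigid d)
    (hD : ¬DiscreteSemimetric d) : Nat.card X = 4 := by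
  obtain ⟨x, y, u, v, hxy, hxu, hxv, hyu, hyv, huv, h⟩ :=
    exists_pairwise_ne_dist_eq hd hsim hSR hD
  have huniv : Set.univ = ({x, y, u, v} : Set X) := by
    refine (Set.eq_univ_of_forall fun w => ?_).symm
    by_contra hw
    simp only [Set.mem_insert_iff, Set.mem_singleton_iff, not_or] at hw
    obtain ⟨hwx, hwy, hwu, hwv⟩ := hw
    have hxy_wv := dist_eq_dist_of_swap hsim h hxu (Ne.symm hwx) hyu (Ne.symm hwy)
      (Ne.symm huv) (Ne.symm hwv)
    have hvu_vw : d v u = d v w := by rw [hd.1 v u, ← h, hxy_wv, hd.1 w v]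
    exact hD (discreteSemimetric_of_dist_eq_dist hd.1 (fun x => (hd.2.2 x x).mpr rfl) hsim
      (Ne.symm hwv) (Ne.symm hwu) hvu_vw)
  rw [← Set.ncard_univ, Set.ncard_eq_four]
  exact ⟨x, y, u, v, hxy, hxu, hxv, hyu, hyv, huv, huniv⟩

end SelfSimilar

theorem stmt14_general {X : Type*} :
    Nat.card X = 4 ↔
      ∃ d : X → X → ℝ, IsSemimetric d ∧
        (∀ Φ : Equiv.Perm X, CombSelfSim d Φ) ∧
        ¬StronglyRigid d ∧ ¬DiscreteSemimetric d := by
  constructor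
  · intro hcard
    have : Finite X := Nat.finite_of_card_ne_zero (by omega)
    let e := Finite.equivFinOfCardEq hcard
    exact ⟨fun x y => kleinDist (e x) (e y), isSemimetric_kleinDist.comp_injective e.injective,
      combSelfSim_comp_equiv combSelfSim_kleinDist e,
      fun h => not_stronglyRigid_kleinDist (h.of_comp_equiv e),
      (discreteSemimetric_comp_equiv_iff e).not.mpr not_discreteSemimetric_kleinDist⟩
  · rintro ⟨d, hd, hsim, hSR, hD⟩
    exact nat_card_eq_four_of_not_stronglyRigid hd hsim hSR hD

theorem stmt14 {X : Type*} [Nonempty X] :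
    Nat.card X = 4 ↔
      ∃ d : X → X → ℝ, IsSemimetric d ∧
        (∀ Φ : Equiv.Perm X, CombSelfSim d Φ) ∧
        ¬StronglyRigid d ∧ ¬DiscreteSemimetric d :=
  stmt14_general
end

section
/- Let (X,d) be a semimetric space with |X| > 𝔠 (cardinality of the continuum). Then every permutation of X is a combinatorial self similarity of (X,d) if and only if every permutation of X is a self isometry of (X,d). -/
open Cardinal

theorem stmt16 {X : Type*} (d : X → X → ℝ) (hd : IsSemimetric d)
    (h : Cardinal.continuum < Cardinal.mk X) :
    (∀ Φ : Equiv.Perm X, CombSelfSim d Φ) ↔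
      (∀ Φ : Equiv.Perm X, ∀ x y : X, d (Φ x) (Φ y) = d x y) := by
  classical
  obtain ⟨hsymm, hnn, heq⟩ := hd
  constructor
  · intro hall
    have hne : Nonempty X := by
      rw [← Cardinal.mk_ne_zero_iff]
      intro h0
      rw [h0] at h
      exact absurd h (by simp)
    obtain ⟨x0⟩ := hne
    have hninj : ¬ Function.Injective (fun u => d u x0) := by
      intro hi
      have := Cardinal.lift_mk_le_lift_mk_of_injective hi
      rw [Cardinal.mk_real, Cardinal.lift_continuum] at this
      simp only [Cardinal.lift_id'] at this
      exact absurd this (not_le.mpr h)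
    obtain ⟨x, y, hxy, hne2⟩ := Function.not_injective_iff.mp hninj
    have hx0 : x ≠ x0 := by
      intro hx
      apply hne2
      rw [hx] at hxy ⊢
      rw [(heq x0 x0).mpr rfl] at hxy
      exact ((heq y x0).mp hxy.symm).symm
    have hy0 : y ≠ x0 := by
      intro hy
      apply hne2
      rw [hy] at hxy ⊢
      rw [(heq x0 x0).mpr rfl] at hxy
      exact (heq x x0).mp hxy
    have step1 : ∀ u, u ≠ x0 → d u x0 = d x x0 := by
      intro u hu
      by_cases hux : u = x
      · rw [hux]
      by_cases huy : u = y
      · rw [huy]; exact hxy.symm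
      have key := (hall (Equiv.swap y u) x x0 y x0).mp hxy
      rw [Equiv.swap_apply_of_ne_of_ne hne2 (Ne.symm hux),
        Equiv.swap_apply_of_ne_of_ne (Ne.symm hy0) (Ne.symm hu),
        Equiv.swap_apply_left] at key
      exact key.symm
    have step2 : ∀ s t : X, s ≠ t → d s t = d x x0 := by
      intro s t hst
      by_cases ht0 : t = x0
      · rw [ht0]; exact step1 s (ht0 ▸ hst)
      by_cases hs0 : s = x0
      · rw [hs0, hsymm]; exact step1 t ht0
      have h1 : d s x0 = d t x0 := (step1 s hs0).trans (step1 t ht0).symm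
      have key := (hall (Equiv.swap x0 t) s x0 t x0).mp h1
      rw [Equiv.swap_apply_of_ne_of_ne hs0 hst, Equiv.swap_apply_left,
        Equiv.swap_apply_right] at key
      rw [key, hsymm]
      exact step1 t ht0
    intro Φ a b
    by_cases hab : a = b
    · rw [hab, (heq b b).mpr rfl, (heq (Φ b) (Φ b)).mpr rfl]
    · rw [step2 a b hab, step2 (Φ a) (Φ b) (fun hc => hab (Φ.injective hc))]
  · intro hiso Φ a b u v
    rw [hiso Φ a b, hiso Φ u v]
end

section
/- Let (X,d) be a semimetric space with |X| ≥ 5 in which every permutation is a combinatorial self similarity. Then d is strongly rigid or discrete. -/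
open Cardinal

lemma exists_perm_triple {X : Type*} [DecidableEq X] {a b c p q r : X}
    (hab : a ≠ b) (hac : a ≠ c) (hbc : b ≠ c)
    (hpq : p ≠ q) (hpr : p ≠ r) (hqr : q ≠ r) :
    ∃ Φ : Equiv.Perm X, Φ a = p ∧ Φ b = q ∧ Φ c = r := by
  set σ1 := Equiv.swap a p with hσ1
  have h1a : σ1 a = p := Equiv.swap_apply_left a p
  set b' := σ1 b with hb'
  have hb'p : b' ≠ p := by
    rw [hb', ← h1a]; exact σ1.injective.ne hab.symm
  set σ2 := Equiv.swap b' q with hσ2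
  set c' := σ2 (σ1 c) with hc'
  have hcp : σ1 c ≠ p := by rw [← h1a]; exact σ1.injective.ne hac.symm
  have h2p : σ2 p = p := Equiv.swap_apply_of_ne_of_ne hb'p.symm hpq
  have hc'p : c' ≠ p := by
    rw [hc', ← h2p]; exact σ2.injective.ne hcp
  have hc'q : c' ≠ q := by
    have : σ1 c ≠ b' := σ1.injective.ne hbc.symm
    rw [hc', ← Equiv.swap_apply_left b' q, hσ2]
    exact (Equiv.swap b' q).injective.ne this
  set σ3 := Equiv.swap c' r with hσ3
  refine ⟨(σ3 * σ2) * σ1, ?_, ?_, ?_⟩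
  · show σ3 (σ2 (σ1 a)) = p
    rw [h1a, h2p]
    exact Equiv.swap_apply_of_ne_of_ne hc'p.symm hpr
  · show σ3 (σ2 (σ1 b)) = q
    rw [← hb', Equiv.swap_apply_left b' q]
    exact Equiv.swap_apply_of_ne_of_ne hc'q.symm hqr
  · show σ3 (σ2 (σ1 c)) = r
    rw [← hc']; exact Equiv.swap_apply_left c' r

lemma cherry_transport {X : Type*} [DecidableEq X] {d : X → X → ℝ}
    (h : ∀ Φ : Equiv.Perm X, CombSelfSim d Φ)
    {a b c : X} (hab : a ≠ b) (hac : a ≠ c) (hbc : b ≠ c)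
    (heq : d a b = d a c) :
    ∀ p q r : X, p ≠ q → p ≠ r → q ≠ r → d p q = d p r := by
  intro p q r hpq hpr hqr
  obtain ⟨Φ, ha, hb, hc⟩ := exists_perm_triple hab hac hbc hpq hpr hqr
  have := (h Φ a b a c).mp heq
  rwa [ha, hb, hc] at this

theorem stmt18 {X : Type*} (d : X → X → ℝ) (hd : IsSemimetric d)
    (h5 : 5 ≤ Cardinal.mk X)
    (h : ∀ Φ : Equiv.Perm X, CombSelfSim d Φ) :
    StronglyRigid d ∨ DiscreteSemimetric d := by
  classical
  by_cases hsr : StronglyRigid d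
  · exact Or.inl hsr
  right
  obtain ⟨hsymm, -, hzero⟩ := hd
  unfold StronglyRigid at hsr
  push_neg at hsr
  obtain ⟨x, y, u, v, heq, hne0, h1, h2⟩ := hsr
  have hxy : x ≠ y := fun e => hne0 ((hzero x y).mpr e)
  have huv : u ≠ v := fun e => hne0 (heq.trans ((hzero u v).mpr e))
  have hcherry : ∃ a b c : X, a ≠ b ∧ a ≠ c ∧ b ≠ c ∧ d a b = d a c := by
    by_cases hxu : x = u
    · subst hxu
      exact ⟨x, y, v, hxy, huv, h1 rfl, heq⟩
    by_cases hxv : x = v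
    · subst hxv
      exact ⟨x, y, u, hxy, Ne.symm huv, h2 rfl, heq.trans (hsymm u x)⟩
    by_cases hyu : y = u
    · subst hyu
      exact ⟨y, x, v, hxy.symm, huv, hxv, (hsymm y x).trans heq⟩
    by_cases hyv : y = v
    · subst hyv
      exact ⟨y, x, u, hxy.symm, Ne.symm huv, hxu,
        (hsymm y x).trans (heq.trans (hsymm u y))⟩
    · have hw : ∃ w : X, w ≠ x ∧ w ≠ y ∧ w ≠ u ∧ w ≠ v := by
        by_contra hcon
        push_neg at hcon
        have hsur : Function.Surjective
            (fun i : ULift (Fin 4) => ![x, y, u, v] i.down) := by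
          intro z
          by_cases hz1 : z = x
          · exact ⟨⟨0⟩, hz1.symm⟩
          by_cases hz2 : z = y
          · exact ⟨⟨1⟩, hz2.symm⟩
          by_cases hz3 : z = u
          · exact ⟨⟨2⟩, hz3.symm⟩
          · exact ⟨⟨3⟩, (hcon z hz1 hz2 hz3).symm⟩
        have hle := Cardinal.mk_le_of_surjective hsur
        simp at hle
        have : (5 : Cardinal) ≤ 4 := h5.trans hle
        norm_num at this
      obtain ⟨w, hwx, hwy, hwu, hwv⟩ := hw
      have hs := (h (Equiv.swap v w) x y u v).mp heq
      rw [Equiv.swap_apply_of_ne_of_ne hxv (Ne.symm hwx),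
        Equiv.swap_apply_of_ne_of_ne hyv (Ne.symm hwy),
        Equiv.swap_apply_of_ne_of_ne huv (Ne.symm hwu),
        Equiv.swap_apply_left] at hs
      exact ⟨u, v, w, huv, Ne.symm hwu, Ne.symm hwv, heq.symm.trans hs⟩
  obtain ⟨a, b, c, hab, hac, hbc, hcheq⟩ := hcherry
  have key := cherry_transport h hab hac hbc hcheq
  have hall : ∀ p q r s : X, p ≠ q → r ≠ s → d p q = d r s := by
    intro p q r s hpq hrs
    by_cases hpr : p = r
    · subst hpr
      by_cases hqs : q = s
      · rw [hqs]
      · exact key p q s hpq hrs hqs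
    by_cases hps : p = s
    · subst hps
      by_cases hqr : q = r
      · rw [hqr, hsymm r p]
      · exact (key p q r hpq (Ne.symm hrs) hqr).trans (hsymm p r)
    by_cases hqr : q = r
    · subst hqr
      exact (hsymm p q).trans (key q p s (Ne.symm hpq) hrs hps)
    by_cases hqs : q = s
    · subst hqs
      exact ((hsymm p q).trans (key q p r (Ne.symm hpq) (Ne.symm hrs) hpr)).trans
        (hsymm q r)
    · exact (key p q r hpq hpr hqr).trans
        ((hsymm p r).trans (key r p s (Ne.symm hpr) hrs hps))
  have hsub : Set.range (Function.uncurry d) ⊆ {0, d a b} := by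
    rintro z ⟨⟨p, q⟩, rfl⟩
    by_cases hpq : p = q
    · left
      exact (hzero p q).mpr hpq
    · right
      exact hall p q a b hpq hab
  calc Cardinal.mk (Set.range (Function.uncurry d))
      ≤ Cardinal.mk ({0, d a b} : Set ℝ) := Cardinal.mk_le_mk_of_subset hsub
    _ ≤ Cardinal.mk ({d a b} : Set ℝ) + 1 := Cardinal.mk_insert_le
    _ = 2 := by rw [Cardinal.mk_singleton]; norm_num
end
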